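/- Error analysis for free-energy-based energy estimation: let d ≥ 2, let ε_1, ε_2 > 0, set T := ε_1 / ln d, suppose the feasible set {ρ ∈ D_d : Tr[Q_i ρ] = q_i ∀ i ∈ [c]} is nonempty, let f(μ) := μ·q − T ln Z_T(μ), and suppose μ ∈ ℝ^c satisfies |F_T(Q,q) − f(μ)| ≤ ε_2. Then the estimate Ẽ := Tr[H ρ_T(μ)] + Σ_{i∈[c]} μ_i (q_i − Tr[Q_i ρ_T(μ)]) satisfies |E(Q,q) − Ẽ| ≤ 2ε_1 + ε_2. -/

import Mathlib

open Matrix MeasureTheory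
open scoped ComplexOrder

noncomputable section

/-- A density matrix: a positive semi-definite complex matrix with unit trace. -/
def IsDensityMatrix {n : Type*} [Fintype n] (ρ : Matrix n n ℂ) : Prop :=
  ρ.PosSemidef ∧ ρ.trace = 1

/-- von Neumann entropy `S(ρ) = -Tr[ρ ln ρ]` via eigenvalues,
with the convention `0 ln 0 = 0` (since `Real.log 0 = 0`). -/
noncomputable def vnEntropy {n : Type*} [Fintype n] [DecidableEq n]
    (ρ : Matrix n n ℂ) : ℝ :=
  if h : ρ.IsHermitian then -∑ i, h.eigenvalues i * Real.log (h.eigenvalues i) else 0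

/-- Matrix logarithm via the functional calculus (junk value `0` off Hermitian matrices),
with the convention `log 0 = 0` on eigenvalues. -/
noncomputable def matLog {n : Type*} [Fintype n] [DecidableEq n]
    (A : Matrix n n ℂ) : Matrix n n ℂ :=
  if h : A.IsHermitian then
    (h.eigenvectorUnitary : Matrix n n ℂ) *
      Matrix.diagonal (fun i => (Real.log (h.eigenvalues i) : ℂ)) *
      star (h.eigenvectorUnitary : Matrix n n ℂ)
  else 0

/-- Real matrix power via the functional calculus (junk value `0` off Hermitian matrices). -/
noncomputable def matRpow {n : Type*} [Fintype n] [DecidableEq n]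
    (A : Matrix n n ℂ) (s : ℝ) : Matrix n n ℂ :=
  if h : A.IsHermitian then
    (h.eigenvectorUnitary : Matrix n n ℂ) *
      Matrix.diagonal (fun i => ((h.eigenvalues i ^ s : ℝ) : ℂ)) *
      star (h.eigenvectorUnitary : Matrix n n ℂ)
  else 0

/-- Operator (spectral) norm of a complex square matrix. -/
noncomputable def opNorm {n : Type*} [Fintype n] [DecidableEq n] (A : Matrix n n ℂ) : ℝ :=
  ‖Matrix.toEuclideanCLM (𝕜 := ℂ) A‖

/-- `μ · Q := ∑ i, μ i • Q i`. -/
def muDotQ {d c : ℕ} (Q : Fin c → Matrix (Fin d) (Fin d) ℂ) (μ : Fin c → ℝ) :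
    Matrix (Fin d) (Fin d) ℂ :=
  ∑ i, (μ i : ℂ) • Q i

/-- Partition function `Z_T(μ) = Tr[exp(-(H - μ·Q)/T)]`. -/
noncomputable def partitionZ {d c : ℕ} (H : Matrix (Fin d) (Fin d) ℂ)
    (Q : Fin c → Matrix (Fin d) (Fin d) ℂ) (T : ℝ) (μ : Fin c → ℝ) : ℝ :=
  (Matrix.trace (NormedSpace.exp ((-(T⁻¹) : ℂ) • (H - muDotQ Q μ)))).re

/-- Thermal state `ρ_T(μ) = exp(-(H - μ·Q)/T) / Z_T(μ)`. -/
noncomputable def thermalState {d c : ℕ} (H : Matrix (Fin d) (Fin d) ℂ)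
    (Q : Fin c → Matrix (Fin d) (Fin d) ℂ) (T : ℝ) (μ : Fin c → ℝ) :
    Matrix (Fin d) (Fin d) ℂ :=
  ((partitionZ H Q T μ : ℂ))⁻¹ • NormedSpace.exp ((-(T⁻¹) : ℂ) • (H - muDotQ Q μ))

/-- Umegaki relative entropy `D(ω‖τ) = Tr[ω (ln ω − ln τ)]`. -/
noncomputable def relEntropy {n : Type*} [Fintype n] [DecidableEq n]
    (ω τ : Matrix n n ℂ) : ℝ :=
  (Matrix.trace (ω * (matLog ω - matLog τ))).re

end

/-!
On density matrices `0 ≤ S(ρ) ≤ ln d`, so `0 ≤ T·S(ρ) ≤ ε₁` and the constrained free energy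
`F_T(Q,q)` lies within `ε₁` of `E(Q,q)`. For the thermal state the Gibbs identity
`T·S(ρ_T(μ)) = Tr[(H - μ·Q) ρ_T(μ)] + T ln Z_T(μ)` turns the estimate into
`Ẽ = f(μ) + T·S(ρ_T(μ))`, which lies within `ε₁` of `f(μ)`. The triangle inequality through
`F_T(Q,q)` and `f(μ)` gives `2ε₁ + ε₂`.
-/

lemma Real.sum_negMulLog_nonneg {ι : Type*} [Fintype ι] {p : ι → ℝ} (hp₀ : ∀ i, 0 ≤ p i)
    (hp₁ : ∑ i, p i = 1) : 0 ≤ ∑ i, Real.negMulLog (p i) :=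
  Finset.sum_nonneg fun i _ => Real.negMulLog_nonneg (hp₀ i)
    (hp₁ ▸ Finset.single_le_sum (fun j _ => hp₀ j) (Finset.mem_univ i))

lemma Real.sum_negMulLog_le_log_card {ι : Type*} [Fintype ι] [Nonempty ι] {p : ι → ℝ}
    (hp₀ : ∀ i, 0 ≤ p i) (hp₁ : ∑ i, p i = 1) :
    ∑ i, Real.negMulLog (p i) ≤ Real.log (Fintype.card ι) := by
  set N : ℝ := (Fintype.card ι : ℝ)
  have hN : 0 < N := Nat.cast_pos.mpr Fintype.card_pos
  have hJensen := Real.concaveOn_negMulLog.le_map_sum (t := Finset.univ) (w := fun _ => N⁻¹)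
    (p := p) (fun _ _ => inv_nonneg.mpr hN.le) (by simp [N, hN.ne'])
    (fun i _ => Set.mem_Ici.mpr (hp₀ i))
  simp only [smul_eq_mul, ← Finset.mul_sum, hp₁, mul_one] at hJensen
  rw [Real.negMulLog, Real.log_inv, neg_mul_neg] at hJensen
  exact (mul_le_mul_iff_of_pos_left (inv_pos.mpr hN)).mp hJensen

lemma csInf_image_le_csInf_image_add {α : Type*} {s : Set α} {f g : α → ℝ} {δ : ℝ}
    (hs : s.Nonempty) (hf : BddBelow (f '' s)) (hfg : ∀ a ∈ s, f a ≤ g a + δ) :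
    sInf (f '' s) ≤ sInf (g '' s) + δ := by
  rw [← sub_le_iff_le_add]
  refine le_csInf (hs.image g) ?_
  rintro _ ⟨a, ha, rfl⟩
  linarith [csInf_le hf (Set.mem_image_of_mem f ha), hfg a ha]

lemma abs_csInf_image_sub_csInf_image_le {α : Type*} {s : Set α} {f g : α → ℝ} {δ : ℝ}
    (hs : s.Nonempty) (hf : BddBelow (f '' s)) (hfg : ∀ a ∈ s, |f a - g a| ≤ δ) :
    |sInf (f '' s) - sInf (g '' s)| ≤ δ := by
  have hg : BddBelow (g '' s) := by
    obtain ⟨b, hb⟩ := hf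
    refine ⟨b - δ, ?_⟩
    rintro _ ⟨a, ha, rfl⟩
    linarith [hb (Set.mem_image_of_mem f ha), (abs_le.mp (hfg a ha)).2]
  have hfg' := fun a ha => abs_le.mp (hfg a ha)
  rw [abs_sub_le_iff]
  constructor
  · linarith [csInf_image_le_csInf_image_add (g := g) hs hf fun a ha => by linarith [hfg' a ha]]
  · linarith [csInf_image_le_csInf_image_add (g := f) hs hg fun a ha => by linarith [hfg' a ha]]

lemma Set.setOf_exists_and_and_eq_image {α β : Type*} (p q : α → Prop) (f : α → β) :
    {b | ∃ a, p a ∧ q a ∧ b = f a} = f '' {a | p a ∧ q a} := by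
  ext b
  simp only [Set.mem_ofPred_eq, Set.mem_image, and_assoc, eq_comm]

namespace Matrix

variable {n : Type*} [Fintype n] [DecidableEq n]

open scoped Matrix.Norms.L2Operator MatrixOrder in
lemma PosSemidef.trace_mul_nonneg {A B : Matrix n n ℂ} (hA : A.PosSemidef) (hB : B.PosSemidef) :
    0 ≤ (A * B).trace := by
  obtain ⟨C, rfl⟩ := CStarAlgebra.nonneg_iff_eq_mul_star_self.mp hB.nonneg
  rw [← Matrix.mul_assoc, Matrix.trace_mul_cycle]
  exact (hA.conjTranspose_mul_mul_same C).trace_nonneg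

open scoped Matrix.Norms.L2Operator MatrixOrder in
lemma IsHermitian.neg_norm_mul_le_re_trace_mul {H ρ : Matrix n n ℂ} (hH : H.IsHermitian)
    (hρ : ρ.PosSemidef) : -‖H‖ * ρ.trace.re ≤ (H * ρ).trace.re := by
  have hP : (H + algebraMap ℝ _ ‖H‖).PosSemidef := by
    rw [← nonneg_iff_posSemidef, ← sub_neg_eq_add, sub_nonneg]
    exact hH.isSelfAdjoint.neg_algebraMap_norm_le_self
  have := (Complex.nonneg_iff.mp (hP.trace_mul_nonneg hρ)).1
  rw [add_mul, trace_add, Algebra.algebraMap_eq_smul_one, smul_mul_assoc, one_mul, trace_smul,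
    Complex.add_re, Complex.real_smul, Complex.re_ofReal_mul] at this
  linarith

lemma IsHermitian.trace_cfc {A : Matrix n n ℂ} (hA : A.IsHermitian) (f : ℝ → ℝ) :
    (cfc f A).trace = ∑ i, (f (hA.eigenvalues i) : ℂ) := by
  rw [hA.cfc_eq, IsHermitian.cfc, Unitary.conjStarAlgAut_apply, trace_mul_cycle,
    Unitary.coe_star_mul_self, one_mul, trace_diagonal]
  rfl

lemma IsHermitian.re_trace_mul_cfc {A : Matrix n n ℂ} (hA : A.IsHermitian) (f : ℝ → ℝ) :
    (A * cfc f A).trace.re = ∑ i, hA.eigenvalues i * f (hA.eigenvalues i) := by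
  nth_rewrite 1 [← cfc_id' ℝ A]
  rw [← cfc_mul _ _ A (hg := A.finite_real_spectrum.continuousOn f), hA.trace_cfc]
  simp only [Complex.re_sum, Complex.ofReal_re]

open scoped Matrix.Norms.L2Operator in
lemma IsHermitian.exp_ofReal_smul {A : Matrix n n ℂ} (hA : A.IsHermitian) (s : ℝ) :
    NormedSpace.exp ((s : ℂ) • A) = cfc (fun x => Real.exp (s * x)) A := by
  rw [cfc_comp_const_mul s Real.exp A,
    CFC.real_exp_eq_normedSpace_exp ((IsSelfAdjoint.all s).smul hA.isSelfAdjoint), Complex.coe_smul]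

end Matrix

open Matrix

section Entropy

variable {n : Type*} [Fintype n] [DecidableEq n]

lemma vnEntropy_eq_sum_negMulLog {σ : Matrix n n ℂ} (hσ : σ.IsHermitian) :
    vnEntropy σ = ∑ i, Real.negMulLog (hσ.eigenvalues i) := by
  simp only [vnEntropy, dif_pos hσ, Real.negMulLog, neg_mul, Finset.sum_neg_distrib]

lemma Matrix.IsHermitian.vnEntropy_cfc {A : Matrix n n ℂ} (hA : A.IsHermitian) (f : ℝ → ℝ) :
    vnEntropy (cfc f A) = ∑ i, Real.negMulLog (f (hA.eigenvalues i)) := by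
  have hσ : (cfc f A).IsHermitian := cfc_predicate f A
  have h := hσ.trace_cfc Real.negMulLog
  rw [← cfc_comp' Real.negMulLog f A (hf := A.finite_real_spectrum.continuousOn f),
    hA.trace_cfc] at h
  have h' := congrArg Complex.re h
  simp only [Complex.re_sum, Complex.ofReal_re] at h'
  rw [vnEntropy_eq_sum_negMulLog hσ, ← h']

lemma IsDensityMatrix.sum_eigenvalues {ρ : Matrix n n ℂ} (hρ : IsDensityMatrix ρ) :
    ∑ i, hρ.1.1.eigenvalues i = 1 := by
  simpa [hρ.2] using (congrArg Complex.re hρ.1.1.trace_eq_sum_eigenvalues).symm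

lemma IsDensityMatrix.vnEntropy_nonneg {ρ : Matrix n n ℂ} (hρ : IsDensityMatrix ρ) :
    0 ≤ vnEntropy ρ := by
  rw [vnEntropy_eq_sum_negMulLog hρ.1.1]
  exact Real.sum_negMulLog_nonneg hρ.1.eigenvalues_nonneg hρ.sum_eigenvalues

lemma IsDensityMatrix.vnEntropy_le_log_card [Nonempty n] {ρ : Matrix n n ℂ}
    (hρ : IsDensityMatrix ρ) : vnEntropy ρ ≤ Real.log (Fintype.card n) := by
  rw [vnEntropy_eq_sum_negMulLog hρ.1.1]
  exact Real.sum_negMulLog_le_log_card hρ.1.eigenvalues_nonneg hρ.sum_eigenvalues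

open scoped Matrix.Norms.L2Operator in
lemma Matrix.IsHermitian.bddBelow_re_trace_mul {H : Matrix n n ℂ} (hH : H.IsHermitian)
    {s : Set (Matrix n n ℂ)} (hs : ∀ ρ ∈ s, IsDensityMatrix ρ) :
    BddBelow ((fun ρ => (H * ρ).trace.re) '' s) := by
  refine ⟨-‖H‖, ?_⟩
  rintro _ ⟨ρ, hρ, rfl⟩
  simpa [(hs ρ hρ).2] using hH.neg_norm_mul_le_re_trace_mul (hs ρ hρ).1

end Entropy

section Thermal

variable {d c : ℕ} {H : Matrix (Fin d) (Fin d) ℂ} {Q : Fin c → Matrix (Fin d) (Fin d) ℂ}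
  {T : ℝ} {μ : Fin c → ℝ}

lemma isHermitian_muDotQ (hQ : ∀ i, (Q i).IsHermitian) (μ : Fin c → ℝ) :
    (muDotQ Q μ).IsHermitian :=
  isSelfAdjoint_sum _ fun i _ =>
    (show IsSelfAdjoint (μ i : ℂ) from Complex.conj_ofReal _).smul (hQ i).isSelfAdjoint

lemma re_trace_sub_muDotQ_mul (ρ : Matrix (Fin d) (Fin d) ℂ) :
    ((H - muDotQ Q μ) * ρ).trace.re = (H * ρ).trace.re - ∑ i, μ i * (Q i * ρ).trace.re := by
  simp only [muDotQ, sub_mul, Finset.sum_mul, trace_sub, trace_sum, smul_mul_assoc, trace_smul,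
    Complex.sub_re, Complex.re_sum, smul_eq_mul, Complex.re_ofReal_mul]

lemma exp_neg_inv_smul_eq_cfc (hA : (H - muDotQ Q μ).IsHermitian) :
    NormedSpace.exp ((-(T⁻¹) : ℂ) • (H - muDotQ Q μ)) =
      cfc (fun x => Real.exp (-T⁻¹ * x)) (H - muDotQ Q μ) := by
  rw [← Complex.ofReal_neg]
  exact hA.exp_ofReal_smul _

lemma partitionZ_eq_sum (hA : (H - muDotQ Q μ).IsHermitian) :
    partitionZ H Q T μ = ∑ i, Real.exp (-T⁻¹ * hA.eigenvalues i) := by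
  rw [partitionZ, exp_neg_inv_smul_eq_cfc hA, hA.trace_cfc]
  simp only [Complex.re_sum, Complex.ofReal_re]

lemma partitionZ_pos [NeZero d] (hA : (H - muDotQ Q μ).IsHermitian) :
    0 < partitionZ H Q T μ := by
  rw [partitionZ_eq_sum hA]
  exact Finset.sum_pos (fun i _ => Real.exp_pos _) Finset.univ_nonempty

lemma partitionZ_inv_mul_sum_exp [NeZero d] (hA : (H - muDotQ Q μ).IsHermitian) :
    (partitionZ H Q T μ)⁻¹ * ∑ i, Real.exp (-T⁻¹ * hA.eigenvalues i) = 1 := by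
  rw [← partitionZ_eq_sum hA, inv_mul_cancel₀ (partitionZ_pos hA).ne']

lemma thermalState_eq_cfc (hA : (H - muDotQ Q μ).IsHermitian) :
    thermalState H Q T μ =
      cfc (fun x => (partitionZ H Q T μ)⁻¹ * Real.exp (-T⁻¹ * x)) (H - muDotQ Q μ) := by
  rw [thermalState, exp_neg_inv_smul_eq_cfc hA,
    cfc_const_mul _ _ _ ((H - muDotQ Q μ).finite_real_spectrum.continuousOn _),
    ← Complex.coe_smul, Complex.ofReal_inv]

open scoped MatrixOrder in
lemma isDensityMatrix_thermalState [NeZero d] (hA : (H - muDotQ Q μ).IsHermitian) :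
    IsDensityMatrix (thermalState H Q T μ) := by
  rw [thermalState_eq_cfc hA]
  refine ⟨nonneg_iff_posSemidef.mp (cfc_nonneg fun x _ => ?_), ?_⟩
  · exact mul_nonneg (inv_nonneg.mpr (partitionZ_pos hA).le) (Real.exp_nonneg _)
  · rw [hA.trace_cfc]
    exact_mod_cast (Finset.mul_sum _ _ _).symm.trans (partitionZ_inv_mul_sum_exp hA)

/-- Gibbs identity, from `ln ρ_T(μ) = -(H - μ·Q)/T - ln Z_T(μ)`. -/
lemma mul_vnEntropy_thermalState [NeZero d] (hA : (H - muDotQ Q μ).IsHermitian) (hT : T ≠ 0) :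
    T * vnEntropy (thermalState H Q T μ) =
      ((H - muDotQ Q μ) * thermalState H Q T μ).trace.re + T * Real.log (partitionZ H Q T μ) := by
  set Z := partitionZ H Q T μ
  have hZ : 0 < Z := partitionZ_pos hA
  have hterm : ∀ x, T * Real.negMulLog (Z⁻¹ * Real.exp (-T⁻¹ * x)) =
      x * (Z⁻¹ * Real.exp (-T⁻¹ * x)) + T * Real.log Z * (Z⁻¹ * Real.exp (-T⁻¹ * x)) := by
    intro x
    rw [Real.negMulLog, Real.log_mul (inv_ne_zero hZ.ne') (Real.exp_ne_zero _), Real.log_inv,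
      Real.log_exp]
    field_simp
    ring
  rw [thermalState_eq_cfc hA, hA.vnEntropy_cfc, hA.re_trace_mul_cfc, Finset.mul_sum,
    Finset.sum_congr rfl fun i _ => hterm _, Finset.sum_add_distrib, ← Finset.mul_sum,
    ← Finset.mul_sum, partitionZ_inv_mul_sum_exp hA, mul_one]

lemma thermal_estimate_eq_add_mul_vnEntropy [NeZero d] (hA : (H - muDotQ Q μ).IsHermitian)
    (hT : T ≠ 0) (q : Fin c → ℝ) :
    (H * thermalState H Q T μ).trace.re
        + ∑ i, μ i * (q i - (Q i * thermalState H Q T μ).trace.re) =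
      (∑ i, μ i * q i - T * Real.log (partitionZ H Q T μ))
        + T * vnEntropy (thermalState H Q T μ) := by
  rw [mul_vnEntropy_thermalState hA hT, re_trace_sub_muDotQ_mul]
  simp only [mul_sub, Finset.sum_sub_distrib]
  ring

end Thermal

theorem stmt_16_general (d c : ℕ) (hd : 2 ≤ d)
    (H : Matrix (Fin d) (Fin d) ℂ) (hH : H.IsHermitian)
    (Q : Fin c → Matrix (Fin d) (Fin d) ℂ) (hQ : ∀ i, (Q i).IsHermitian)
    (q : Fin c → ℝ) (ε₁ ε₂ : ℝ) (hε₁ : 0 < ε₁)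
    (T : ℝ) (hTdef : T = ε₁ / Real.log d)
    (hfeas : ∃ ρ : Matrix (Fin d) (Fin d) ℂ, IsDensityMatrix ρ ∧
      ∀ i, Matrix.trace (Q i * ρ) = (q i : ℂ))
    (μ : Fin c → ℝ)
    (hμ : |sInf {x : ℝ | ∃ ρ : Matrix (Fin d) (Fin d) ℂ, IsDensityMatrix ρ ∧
        (∀ i, Matrix.trace (Q i * ρ) = (q i : ℂ)) ∧
        x = (Matrix.trace (H * ρ)).re - T * vnEntropy ρ}
      - (∑ i, μ i * q i - T * Real.log (partitionZ H Q T μ))| ≤ ε₂) :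
    |sInf {x : ℝ | ∃ ρ : Matrix (Fin d) (Fin d) ℂ, IsDensityMatrix ρ ∧
        (∀ i, Matrix.trace (Q i * ρ) = (q i : ℂ)) ∧ x = (Matrix.trace (H * ρ)).re}
      - ((Matrix.trace (H * thermalState H Q T μ)).re
        + ∑ i, μ i * (q i - (Matrix.trace (Q i * thermalState H Q T μ)).re))|
    ≤ 2 * ε₁ + ε₂ := by
  have : NeZero d := ⟨by omega⟩
  have hlogd : 0 < Real.log d := Real.log_pos (by exact_mod_cast (by omega : 1 < d))
  have hT : 0 < T := hTdef ▸ div_pos hε₁ hlogd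
  have hTlog : T * Real.log d = ε₁ := by rw [hTdef, div_mul_cancel₀ _ hlogd.ne']
  have hTS : ∀ ρ : Matrix (Fin d) (Fin d) ℂ, IsDensityMatrix ρ →
      0 ≤ T * vnEntropy ρ ∧ T * vnEntropy ρ ≤ ε₁ := fun ρ hρ =>
    ⟨mul_nonneg hT.le hρ.vnEntropy_nonneg,
      hTlog ▸ mul_le_mul_of_nonneg_left (by simpa using hρ.vnEntropy_le_log_card) hT.le⟩
  have hA := hH.sub (isHermitian_muDotQ hQ μ)
  simp only [Set.setOf_exists_and_and_eq_image] at hμ ⊢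
  obtain ⟨ρ₀, hρ₀⟩ := hfeas
  have hEF := abs_csInf_image_sub_csInf_image_le
    (s := {ρ : Matrix (Fin d) (Fin d) ℂ | IsDensityMatrix ρ ∧ ∀ i, (Q i * ρ).trace = (q i : ℂ)})
    (g := fun ρ => (H * ρ).trace.re - T * vnEntropy ρ) ⟨ρ₀, hρ₀⟩
    (hH.bddBelow_re_trace_mul fun ρ hρ => hρ.1) fun ρ hρ => by
      rw [sub_sub_cancel, abs_of_nonneg (hTS ρ hρ.1).1]
      exact (hTS ρ hρ.1).2
  have hρT := hTS _ (isDensityMatrix_thermalState (T := T) hA)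
  rw [thermal_estimate_eq_add_mul_vnEntropy hA hT.ne' q]
  rw [abs_le] at hμ hEF ⊢
  constructor <;> linarith [hρT.1, hρT.2, hμ.1, hμ.2, hEF.1, hEF.2]

/-- error analysis for free-energy-based energy estimation. -/
theorem stmt_16 (d c : ℕ) (hd : 2 ≤ d)
    (H : Matrix (Fin d) (Fin d) ℂ) (hH : H.IsHermitian)
    (Q : Fin c → Matrix (Fin d) (Fin d) ℂ) (hQ : ∀ i, (Q i).IsHermitian)
    (q : Fin c → ℝ) (ε₁ ε₂ : ℝ) (hε₁ : 0 < ε₁) (hε₂ : 0 < ε₂)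
    (T : ℝ) (hTdef : T = ε₁ / Real.log d)
    (hfeas : ∃ ρ : Matrix (Fin d) (Fin d) ℂ, IsDensityMatrix ρ ∧
      ∀ i, Matrix.trace (Q i * ρ) = (q i : ℂ))
    (μ : Fin c → ℝ)
    (hμ : |sInf {x : ℝ | ∃ ρ : Matrix (Fin d) (Fin d) ℂ, IsDensityMatrix ρ ∧
        (∀ i, Matrix.trace (Q i * ρ) = (q i : ℂ)) ∧
        x = (Matrix.trace (H * ρ)).re - T * vnEntropy ρ}
      - (∑ i, μ i * q i - T * Real.log (partitionZ H Q T μ))| ≤ ε₂) :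
    |sInf {x : ℝ | ∃ ρ : Matrix (Fin d) (Fin d) ℂ, IsDensityMatrix ρ ∧
        (∀ i, Matrix.trace (Q i * ρ) = (q i : ℂ)) ∧ x = (Matrix.trace (H * ρ)).re}
      - ((Matrix.trace (H * thermalState H Q T μ)).re
        + ∑ i, μ i * (q i - (Matrix.trace (Q i * thermalState H Q T μ)).re))|
    ≤ 2 * ε₁ + ε₂ :=
  stmt_16_general d c hd H hH Q hQ q ε₁ ε₂ hε₁ T hTdef hfeas μ hμ
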